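/- Let α > 0, γ ∈ (0,1), σ > 0, β > 0, δ ∈ (0, π/2), and let N₁ : ℂ → ℂ satisfy |N₁(β+iω)| < α·|β+iω|^σ for every ω ∈ ℝ. Define ζ(λ) = λ^(1+γ)/(α + N₁(λ)·λ^(−σ)). Let n be a positive integer with n² > (2α)^(1/γ)/cos δ, and let ω ≥ n² cos δ be such that Re ζ(β+iω) ≥ −|ζ(β+iω)| cos δ. Then |n² + ζ(β+iω)|² ≥ ((1/(2α))·ω^(1+γ) − n² cos δ)² + n⁴ sin²δ. -/

import Mathlib

/-!
Write `λ = β + iω` and `ζ(λ) = λ^(1+γ)/D` with `D = α + N₁(λ)λ^(−σ)`. The bound on `N₁` gives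
`|D| < 2α`, hence `|ζ| ≥ |λ|^(1+γ)/(2α) ≥ ω^(1+γ)/(2α) =: R`, and the condition on `n` makes
`R > n² cos δ`. Elementary plane geometry then finishes: a point `w` with `|w| ≥ R` lying in the
sector `Re w ≥ −|w| cos δ` is at distance at least `√((R − m cos δ)² + m² sin² δ)` from `−m`.
-/

open Complex

lemma sq_sub_add_sq_le_norm_ofReal_add_sq {w : ℂ} {m R θ : ℝ} (hm : 0 ≤ m)
    (hRw : R ≤ ‖w‖) (hR : m * Real.cos θ < R) (hsec : -(‖w‖ * Real.cos θ) ≤ w.re) :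
    (R - m * Real.cos θ) ^ 2 + m ^ 2 * Real.sin θ ^ 2 ≤ ‖(m : ℂ) + w‖ ^ 2 := by
  have hnorm : ‖(m : ℂ) + w‖ ^ 2 = (m + w.re) ^ 2 + w.im ^ 2 := by
    rw [Complex.sq_norm, Complex.normSq_apply]
    simp only [add_re, add_im, ofReal_re, ofReal_im, zero_add]
    ring
  have hw : w.re ^ 2 + w.im ^ 2 = ‖w‖ ^ 2 := by
    rw [Complex.sq_norm, Complex.normSq_apply]
    ring
  -- `|m + w|² = m² + 2m Re w + |w|²`, and both the radial and the angular excess are nonnegative.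
  have hradial : 0 ≤ (‖w‖ - R) * (‖w‖ + R - 2 * (m * Real.cos θ)) :=
    mul_nonneg (by linarith) (by linarith)
  have hangular : 0 ≤ 2 * m * (w.re + ‖w‖ * Real.cos θ) := mul_nonneg (by linarith) (by linarith)
  rw [hnorm]
  nlinarith [Real.sin_sq_add_cos_sq θ]

lemma norm_ofReal_add_pos_and_lt {α : ℝ} {x : ℂ} (hx : ‖x‖ < α) :
    0 < ‖(α : ℂ) + x‖ ∧ ‖(α : ℂ) + x‖ < 2 * α := by
  have hα : ‖(α : ℂ)‖ = α := by
    rw [norm_real, Real.norm_of_nonneg ((norm_nonneg x).trans hx.le)]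
  constructor
  · have := norm_sub_norm_le (α : ℂ) (-x)
    rw [sub_neg_eq_add, norm_neg, hα] at this
    linarith
  · linarith [norm_add_le (α : ℂ) x]

lemma norm_mul_cpow_neg_lt {a z : ℂ} {α σ : ℝ} (hz : z ≠ 0) (ha : ‖a‖ < α * ‖z‖ ^ σ) :
    ‖a * z ^ (-(σ : ℂ))‖ < α := by
  have hz' : 0 < ‖z‖ := norm_pos_iff.mpr hz
  rw [norm_mul, ← ofReal_neg, norm_cpow_real, Real.rpow_neg hz'.le,
    ← div_eq_mul_inv, div_lt_iff₀ (Real.rpow_pos_of_pos hz' σ)]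
  exact ha

lemma rpow_div_le_norm_cpow_div {z w : ℂ} {p t b : ℝ} (hp : 0 ≤ p) (ht : 0 ≤ t)
    (htz : t ≤ ‖z‖) (hw : 0 < ‖w‖) (hwb : ‖w‖ ≤ b) :
    t ^ p / b ≤ ‖z ^ (p : ℂ) / w‖ := by
  rw [norm_div, norm_cpow_real]
  exact div_le_div₀ (Real.rpow_nonneg (ht.trans htz) p) (Real.rpow_le_rpow ht htz hp) hw hwb

lemma mul_lt_rpow_one_add {a c ω γ : ℝ} (ha : 0 ≤ a) (hγ : 0 < γ) (hac : a ^ (1 / γ) < c)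
    (hcω : c ≤ ω) : c * a < ω ^ (1 + γ) := by
  have hc : 0 < c := (Real.rpow_nonneg ha _).trans_lt hac
  have ha' : a < c ^ γ := by
    rwa [one_div, Real.rpow_inv_lt_iff_of_pos ha hc.le hγ] at hac
  calc c * a < c * c ^ γ := mul_lt_mul_of_pos_left ha' hc
    _ = c ^ (1 + γ) := by rw [Real.rpow_add hc, Real.rpow_one]
    _ ≤ ω ^ (1 + γ) := Real.rpow_le_rpow hc.le hcω (by linarith)

theorem key_lower_bound_general (α γ σ β δ : ℝ) (N₁ : ℂ → ℂ)
    (hα : 0 < α) (hγ : γ ∈ Set.Ioo (0 : ℝ) 1)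
    (hδ : δ ∈ Set.Ioo 0 (Real.pi / 2))
    (hN₁ : ∀ ω : ℝ, Norm.norm (N₁ ((β : ℂ) + ω * Complex.I))
      < α * Norm.norm ((β : ℂ) + ω * Complex.I) ^ σ)
    (n : ℕ) (hn : (2 * α) ^ (1 / γ) / Real.cos δ < (n : ℝ) ^ 2)
    (ω : ℝ) (hω : (n : ℝ) ^ 2 * Real.cos δ ≤ ω)
    (hsec : -(Norm.norm (((β : ℂ) + ω * Complex.I) ^ ((1 : ℂ) + (γ : ℂ))
          / ((α : ℂ) + N₁ ((β : ℂ) + ω * Complex.I)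
              * ((β : ℂ) + ω * Complex.I) ^ (-(σ : ℂ)))) * Real.cos δ)
        ≤ ((((β : ℂ) + ω * Complex.I) ^ ((1 : ℂ) + (γ : ℂ))
          / ((α : ℂ) + N₁ ((β : ℂ) + ω * Complex.I)
              * ((β : ℂ) + ω * Complex.I) ^ (-(σ : ℂ)))).re)) :
    (1 / (2 * α) * ω ^ (1 + γ) - (n : ℝ) ^ 2 * Real.cos δ) ^ 2
        + (n : ℝ) ^ 4 * Real.sin δ ^ 2
      ≤ Norm.norm (((n : ℝ) ^ 2 : ℂ)
          + ((β : ℂ) + ω * Complex.I) ^ ((1 : ℂ) + (γ : ℂ))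
            / ((α : ℂ) + N₁ ((β : ℂ) + ω * Complex.I)
                * ((β : ℂ) + ω * Complex.I) ^ (-(σ : ℂ)))) ^ 2 := by
  set z : ℂ := (β : ℂ) + ω * Complex.I
  have hcos : 0 < Real.cos δ := Real.cos_pos_of_mem_Ioo ⟨by linarith [hδ.1, Real.pi_pos], hδ.2⟩
  have hc : (2 * α) ^ (1 / γ) < (n : ℝ) ^ 2 * Real.cos δ := (div_lt_iff₀ hcos).mp hn
  have hcR : (n : ℝ) ^ 2 * Real.cos δ < 1 / (2 * α) * ω ^ (1 + γ) := by
    rw [one_div_mul_eq_div, lt_div_iff₀ (by positivity)]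
    exact mul_lt_rpow_one_add (by positivity) hγ.1 hc hω
  have hωpos : 0 < ω := ((Real.rpow_nonneg (by positivity) _).trans_lt hc).trans_le hω
  have hωz : ω ≤ ‖z‖ := by
    simpa [z, abs_of_pos hωpos] using abs_im_le_norm z
  have hz : z ≠ 0 := norm_pos_iff.mp (hωpos.trans_le hωz)
  obtain ⟨hD, hD2α⟩ := norm_ofReal_add_pos_and_lt (norm_mul_cpow_neg_lt hz (hN₁ ω))
  have hRζ := rpow_div_le_norm_cpow_div (p := 1 + γ) (by linarith [hγ.1]) hωpos.le hωz hD hD2α.le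
  push_cast at hRζ
  rw [← one_div_mul_eq_div] at hRζ
  have key := sq_sub_add_sq_le_norm_ofReal_add_sq (by positivity) hRζ hcR hsec
  rw [ofReal_pow] at key
  linarith

/-- Key lower bound used for the tail integral: with
`ζ(λ) = λ^(1+γ)/(α + N₁(λ) λ^(−σ))`, if `|N₁(β+iω)| < α |β+iω|^σ`,
`n² > (2α)^(1/γ)/cos δ`, `ω ≥ n² cos δ` and `Re ζ(β+iω) ≥ −|ζ(β+iω)| cos δ`,
then `|n² + ζ(β+iω)|² ≥ ((1/(2α)) ω^(1+γ) − n² cos δ)² + n⁴ sin²δ`. -/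
theorem key_lower_bound (α γ σ β δ : ℝ) (N₁ : ℂ → ℂ)
    (hα : 0 < α) (hγ : γ ∈ Set.Ioo (0 : ℝ) 1) (hσ : 0 < σ) (hβ : 0 < β)
    (hδ : δ ∈ Set.Ioo 0 (Real.pi / 2))
    (hN₁ : ∀ ω : ℝ, Norm.norm (N₁ ((β : ℂ) + ω * Complex.I))
      < α * Norm.norm ((β : ℂ) + ω * Complex.I) ^ σ)
    (n : ℕ) (hn1 : 0 < n) (hn : (2 * α) ^ (1 / γ) / Real.cos δ < (n : ℝ) ^ 2)
    (ω : ℝ) (hω : (n : ℝ) ^ 2 * Real.cos δ ≤ ω)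
    (hsec : -(Norm.norm (((β : ℂ) + ω * Complex.I) ^ ((1 : ℂ) + (γ : ℂ))
          / ((α : ℂ) + N₁ ((β : ℂ) + ω * Complex.I)
              * ((β : ℂ) + ω * Complex.I) ^ (-(σ : ℂ)))) * Real.cos δ)
        ≤ ((((β : ℂ) + ω * Complex.I) ^ ((1 : ℂ) + (γ : ℂ))
          / ((α : ℂ) + N₁ ((β : ℂ) + ω * Complex.I)
              * ((β : ℂ) + ω * Complex.I) ^ (-(σ : ℂ)))).re)) :
    (1 / (2 * α) * ω ^ (1 + γ) - (n : ℝ) ^ 2 * Real.cos δ) ^ 2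
        + (n : ℝ) ^ 4 * Real.sin δ ^ 2
      ≤ Norm.norm (((n : ℝ) ^ 2 : ℂ)
          + ((β : ℂ) + ω * Complex.I) ^ ((1 : ℂ) + (γ : ℂ))
            / ((α : ℂ) + N₁ ((β : ℂ) + ω * Complex.I)
                * ((β : ℂ) + ω * Complex.I) ^ (-(σ : ℂ)))) ^ 2 :=
  key_lower_bound_general α γ σ β δ N₁ hα hγ hδ hN₁ n hn ω hω hsec
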